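/- Assume the oracle language L and oracle tokenizer satisfy Tokenization Consistency and Separation. Suppose a string s ∈ L has a derivation L0 →* p L q → p (h_a A h_b B) q →* p s_a u L v s_b B q →* p s_a u s_L v s_b s_B q = s, where s_a belongs to call token h_a and s_b to return token h_b. Then (s_a u, v s_b s_B) is a nesting pattern of s: p (s_a u)^k s_L (v s_b s_B)^k q ∈ L for all k ≥ 1, and p (s_a u)^k s_L (v s_b s_B)^j q ∉ L whenever k ≠ j. -/
import Mathlib


namespace VStar

inductive Kind : Type
  | plain | call | ret
deriving DecidableEq

variable {α : Type}

/-- Well-matched strings with respect to a tagging. -/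
inductive WellMatched (t : α → Kind) : List α → Prop
  | nil : WellMatched t []
  | plain {c : α} {s : List α} : t c = Kind.plain → WellMatched t s →
      WellMatched t (c :: s)
  | nest {a b : α} {s1 s2 : List α} : t a = Kind.call → t b = Kind.ret →
      WellMatched t s1 → WellMatched t s2 →
      WellMatched t (a :: s1 ++ b :: s2)

/-- Well-matched visibly pushdown grammars. -/
structure VPG (α N : Type) (t : α → Kind) where
  start : N
  peps : N → Prop
  pplain : N → α → N → Prop
  pmatch : N → α → N → α → N → Prop
  plain_ok : ∀ {L c L1}, pplain L c L1 → t c = Kind.plain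
  match_ok : ∀ {L a L1 b L2}, pmatch L a L1 b L2 → t a = Kind.call ∧ t b = Kind.ret

inductive VPG.Derives {α N : Type} {t : α → Kind} (G : VPG α N t) : N → List α → Prop
  | eps {L} : G.peps L → G.Derives L []
  | plain {L c L1 s} : G.pplain L c L1 → G.Derives L1 s → G.Derives L (c :: s)
  | nest {L a L1 b L2 s1 s2} : G.pmatch L a L1 b L2 →
      G.Derives L1 s1 → G.Derives L2 s2 → G.Derives L (a :: s1 ++ b :: s2)

def VPG.lang {α N : Type} {t : α → Kind} (G : VPG α N t) : Set (List α) :=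
  {s | G.Derives G.start s}

/-- A language is a visibly pushdown language (for tagging `t`). -/
def IsVPL (t : α → Kind) (L : Set (List α)) : Prop :=
  ∃ (n : ℕ) (G : VPG α (Fin n) t), L = G.lang

/-- `lpow x k` is the concatenation of `k` copies of `x`. -/
def lpow (x : List α) (k : ℕ) : List α := (List.replicate k x).flatten

/-- A nesting pattern of `s = u ++ x ++ z ++ y ++ v` with respect to language `L`. -/
def NestingPattern (L : Set (List α)) (u x z y v : List α) : Prop :=
  x ≠ [] ∧ y ≠ [] ∧
    (∀ k, 1 ≤ k → u ++ lpow x k ++ z ++ lpow y k ++ v ∈ L) ∧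
    (∀ k j, k ≠ j → u ++ lpow x k ++ z ++ lpow y j ++ v ∉ L)

/-- `x` contains an occurrence of a call symbol with no matching return inside `x`. -/
def UnmatchedCallIn (t : α → Kind) (x : List α) : Prop :=
  ∃ x1 a x2, x = x1 ++ a :: x2 ∧ t a = Kind.call ∧
    ¬ ∃ w b w', x2 = w ++ b :: w' ∧ t b = Kind.ret ∧ WellMatched t w

/-- `y` contains an occurrence of a return symbol with no matching call inside `y`. -/
def UnmatchedRetIn (t : α → Kind) (y : List α) : Prop :=
  ∃ y1 b y2, y = y1 ++ b :: y2 ∧ t b = Kind.ret ∧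
    ¬ ∃ w a w', y1 = w ++ a :: w' ∧ t a = Kind.call ∧ WellMatched t w'

/-- A tagging is compatible with a nesting pattern `(x, y)`. -/
def PatternCompatible (t : α → Kind) (x y : List α) : Prop :=
  UnmatchedCallIn t x ∧ UnmatchedRetIn t y

/-- Compatibility of a tagging with a set `S` of seed strings (patterns w.r.t. `L`). -/
def CompatibleWith (t : α → Kind) (L S : Set (List α)) : Prop :=
  (∀ s ∈ S, WellMatched t s) ∧
  ∀ u x z y v, (u ++ x ++ z ++ y ++ v) ∈ S → NestingPattern L u x z y v →
    PatternCompatible t x y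

/-- Compatibility of a tagging with the whole language. -/
def Compatible (t : α → Kind) (L : Set (List α)) : Prop := CompatibleWith t L L

/-- Syntactic congruence with respect to `L`. -/
def SynCongr (L : Set (List α)) (s1 s2 : List α) : Prop :=
  ∀ u v, u ++ s1 ++ v ∈ L ↔ u ++ s2 ++ v ∈ L

end VStar

namespace VStar

/-- Context derivations: `DCtx G L₁ p L₂ q` means `L₁ →* p L₂ q`. -/
inductive VPG.DCtx {α N : Type} {t : α → Kind} (G : VPG α N t) :
    N → List α → N → List α → Prop
  | refl {L} : G.DCtx L [] L []
  | plain {L c L1 L2 p q} : G.pplain L c L1 → G.DCtx L1 p L2 q →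
      G.DCtx L (c :: p) L2 q
  | nestL {L a A b B L2 p q s} : G.pmatch L a A b B → G.DCtx A p L2 q →
      G.Derives B s → G.DCtx L (a :: p) L2 (q ++ b :: s)
  | nestR {L a A b B L2 p q s} : G.pmatch L a A b B → G.Derives A s →
      G.DCtx B p L2 q → G.DCtx L (a :: s ++ b :: p) L2 q

/-- `Lifts tokenStr s l`: the character string `s` splits into consecutive
pieces belonging to the tokens listed in `l`. -/
def Lifts {α tok : Type} (tokenStr : tok → Set (List α)) (s : List α)
    (l : List tok) : Prop :=
  ∃ parts : List (List α), parts.flatten = s ∧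
    List.Forall₂ (fun p h => p ∈ tokenStr h) parts l

end VStar

namespace VStar

variable {α : Type}

/-- Balance: number of calls minus number of returns. -/
def bal (t : α → Kind) (s : List α) : ℤ :=
  (s.map fun c => match t c with | .call => 1 | .ret => -1 | .plain => 0).sum

@[simp] lemma bal_nil (t : α → Kind) : bal t [] = 0 := rfl

@[simp] lemma bal_cons (t : α → Kind) (c : α) (s : List α) :
    bal t (c :: s) = (match t c with | .call => 1 | .ret => -1 | .plain => 0) + bal t s := by
  simp [bal]

@[simp] lemma bal_append (t : α → Kind) (s1 s2 : List α) :
    bal t (s1 ++ s2) = bal t s1 + bal t s2 := by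
  simp [bal]

@[simp] lemma lpow_zero (x : List α) : lpow x 0 = [] := rfl

@[simp] lemma lpow_succ (x : List α) (k : ℕ) : lpow x (k+1) = x ++ lpow x k := by
  simp [lpow, List.replicate_succ]

lemma lpow_succ' (x : List α) (k : ℕ) : lpow x (k+1) = lpow x k ++ x := by
  induction k with
  | zero => simp
  | succ k ih =>
      rw [lpow_succ, ih, ← List.append_assoc, ← ih, lpow_succ]

lemma bal_lpow (t : α → Kind) (x : List α) (k : ℕ) :
    bal t (lpow x k) = (k : ℤ) * bal t x := by
  induction k with
  | zero => simp
  | succ k ih => simp [ih]; ring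

lemma WellMatched.bal_eq_zero {t : α → Kind} {s : List α}
    (h : WellMatched t s) : bal t s = 0 := by
  induction h with
  | nil => simp
  | plain hc _ ih => simp [hc, ih]
  | nest hca hcb _ _ ih1 ih2 => simp [hca, hcb, ih1, ih2]

lemma VPG.Derives.wm {N : Type} {t : α → Kind} {G : VPG α N t} {L : N} {s : List α}
    (h : G.Derives L s) : WellMatched t s := by
  induction h with
  | eps _ => exact WellMatched.nil
  | plain hr _ ih => exact WellMatched.plain (G.plain_ok hr) ih
  | nest hr _ _ ih1 ih2 =>
      exact WellMatched.nest (G.match_ok hr).1 (G.match_ok hr).2 ih1 ih2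

lemma VPG.DCtx.derives {N : Type} {t : α → Kind} {G : VPG α N t}
    {L1 L2 : N} {p q : List α} (h : G.DCtx L1 p L2 q) :
    ∀ {w : List α}, G.Derives L2 w → G.Derives L1 (p ++ w ++ q) := by
  induction h with
  | refl => intro w hw; simpa using hw
  | plain hr _ ih =>
      intro w hw
      simpa using VPG.Derives.plain hr (ih hw)
  | nestL hr _ hB ih =>
      intro w hw
      have := VPG.Derives.nest hr (ih hw) hB
      simpa [List.append_assoc] using this
  | nestR hr hA _ ih =>
      intro w hw
      have := VPG.Derives.nest hr hA (ih hw)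
      simpa [List.append_assoc] using this

lemma VPG.DCtx.bal_left_nonneg {N : Type} {t : α → Kind} {G : VPG α N t}
    {L1 L2 : N} {p q : List α} (h : G.DCtx L1 p L2 q) : 0 ≤ bal t p := by
  induction h with
  | refl => simp
  | plain hr _ ih => simp [G.plain_ok hr]; omega
  | nestL hr _ _ ih => simp [(G.match_ok hr).1]; omega
  | nestR hr hA _ ih =>
      have hs := (VPG.Derives.wm hA).bal_eq_zero
      simp [(G.match_ok hr).1, (G.match_ok hr).2, hs]; omega

lemma Lifts.append {tok : Type} {ts : tok → Set (List α)} {s1 s2 : List α}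
    {l1 l2 : List tok} (h1 : Lifts ts s1 l1) (h2 : Lifts ts s2 l2) :
    Lifts ts (s1 ++ s2) (l1 ++ l2) := by
  obtain ⟨p1, hp1, hf1⟩ := h1
  obtain ⟨p2, hp2, hf2⟩ := h2
  exact ⟨p1 ++ p2, by simp [hp1, hp2], List.rel_append hf1 hf2⟩

lemma Lifts.single {tok : Type} {ts : tok → Set (List α)} {s : List α} {h : tok}
    (hs : s ∈ ts h) : Lifts ts s [h] :=
  ⟨[s], by simp, List.forall₂_cons.2 ⟨hs, List.Forall₂.nil⟩⟩

lemma Lifts.lpow {tok : Type} {ts : tok → Set (List α)} {s : List α}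
    {l : List tok} (h : Lifts ts s l) (k : ℕ) : Lifts ts (lpow s k) (lpow l k) := by
  induction k with
  | zero => exact ⟨[], by simp, List.Forall₂.nil⟩
  | succ k ih => simpa using h.append ih

end VStar

open VStar in
/-- under Tokenization Consistency and Separation, a recursive
derivation through a matching rule yields a nesting pattern
`(s_a ++ u, v ++ s_b ++ s_B)` of `s = p (s_a u) s_L (v s_b s_B) q`. -/
theorem derivation_yields_nesting_pattern {α : Type} {m n : ℕ}
    (kind : Fin m → Kind) (tokenStr : Fin m → Set (List α))
    (τ : List α → List (Fin m)) (L : Set (List α))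
    (G : VPG (Fin m) (Fin n) kind)
    (hTC : ∀ (prts : List (List α)) (l : List (Fin m)),
      List.Forall₂ (fun p h => p ∈ tokenStr h) prts l → τ prts.flatten = l)
    (hSep : ∀ h h', h ≠ h' → Disjoint (tokenStr h) (tokenStr h'))
    (hNE : ∀ h, ∀ s ∈ tokenStr h, s ≠ [])
    (hLang : ∀ s, s ∈ L ↔ G.Derives G.start (τ s))
    (Lnt A B : Fin n) (ha hb : Fin m)
    (hrule : G.pmatch Lnt ha A hb B)
    (tp tq tu tv tL tB : List (Fin m))
    (hctx : G.DCtx G.start tp Lnt tq)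
    (hmid : G.DCtx A tu Lnt tv)
    (hdL : G.Derives Lnt tL) (hdB : G.Derives B tB)
    (p q u v sL sB sa sb : List α)
    (hp : Lifts tokenStr p tp) (hq : Lifts tokenStr q tq)
    (hu : Lifts tokenStr u tu) (hv : Lifts tokenStr v tv)
    (hsL : Lifts tokenStr sL tL) (hsB : Lifts tokenStr sB tB)
    (hsa : sa ∈ tokenStr ha) (hsb : sb ∈ tokenStr hb) :
    NestingPattern L p (sa ++ u) sL (v ++ sb ++ sB) q := by
  classical
  -- token-level pumping pieces
  set tx : List (Fin m) := ha :: tu with htx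
  set ty : List (Fin m) := tv ++ hb :: tB with hty
  have hsane : sa ≠ [] := hNE ha sa hsa
  have hsbne : sb ≠ [] := hNE hb sb hsb
  have hx : Lifts tokenStr (sa ++ u) tx := by
    simpa [htx] using (Lifts.single hsa).append hu
  have hy : Lifts tokenStr (v ++ sb ++ sB) ty := by
    simpa [hty, List.append_assoc] using hv.append ((Lifts.single hsb).append hsB)
  -- the tokenization of the pumped strings
  have htau : ∀ k j : ℕ,
      τ (p ++ lpow (sa ++ u) k ++ sL ++ lpow (v ++ sb ++ sB) j ++ q) =
        tp ++ lpow tx k ++ tL ++ lpow ty j ++ tq := by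
    intro k j
    have hl : Lifts tokenStr
        (p ++ lpow (sa ++ u) k ++ sL ++ lpow (v ++ sb ++ sB) j ++ q)
        (tp ++ lpow tx k ++ tL ++ lpow ty j ++ tq) :=
      ((((hp.append (hx.lpow k)).append hsL).append (hy.lpow j)).append hq)
    obtain ⟨parts, hflat, hfa⟩ := hl
    have := hTC parts _ hfa
    rwa [hflat] at this
  -- derivability of the diagonal token strings
  have hder : ∀ k : ℕ, G.Derives Lnt (lpow tx k ++ tL ++ lpow ty k) := by
    intro k
    induction k with
    | zero => simpa using hdL
    | succ k ih =>
        have hA : G.Derives A (tu ++ (lpow tx k ++ tL ++ lpow ty k) ++ tv) :=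
          hmid.derives ih
        have h2 := VPG.Derives.nest hrule hA hdB
        rw [lpow_succ, lpow_succ' ty]
        simpa [htx, hty, List.append_assoc] using h2
  -- balances
  have hbal_tx : 1 ≤ bal kind tx := by
    have h1 := hmid.bal_left_nonneg
    have h2 := (G.match_ok hrule).1
    simp [htx, h2]; omega
  have hbal_diag : ∀ k : ℕ,
      bal kind tp + (k : ℤ) * bal kind tx + bal kind tL + (k : ℤ) * bal kind ty
        + bal kind tq = 0 := by
    intro k
    have hds : G.Derives G.start (tp ++ (lpow tx k ++ tL ++ lpow ty k) ++ tq) :=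
      hctx.derives (hder k)
    have := (VPG.Derives.wm hds).bal_eq_zero
    simp [bal_lpow] at this
    linarith
  refine ⟨by simp [hsane], by simp [hsbne], ?_, ?_⟩
  · intro k _
    rw [hLang, htau k k]
    have hds := hctx.derives (hder k)
    simpa [List.append_assoc] using hds
  · intro k j hkj hmem
    rw [hLang, htau k j] at hmem
    have hwm := (VPG.Derives.wm hmem).bal_eq_zero
    simp [bal_lpow] at hwm
    have e0 := hbal_diag 0
    have e1 := hbal_diag 1
    -- from e0, e1 : bal tx + bal ty = 0
    push_cast at e0 e1 hwm
    have hty' : bal kind ty = - bal kind tx := by linarith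
    have : ((k : ℤ) - (j : ℤ)) * bal kind tx = 0 := by
      rw [hty'] at hwm; linear_combination hwm - e0
    rcases mul_eq_zero.1 this with h | h
    · have : (k : ℤ) = j := by linarith
      exact hkj (by exact_mod_cast this)
    · omega
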